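/- Define subsets of (ℤ/5)²: A10 = {(0,0),(0,1),(0,2),(1,4),(2,3),(3,0),(4,0)}, A11 = {(0,0),(1,2),(2,1),(2,2),(3,3),(3,4),(4,3)}, A21 = {(0,0),(1,2),(2,1),(2,2)}, A01 = {(0,0),(3,3),(3,4),(4,3)}. Then the only triple (χ1, χ2, χ3) with χ1 ∈ A10, χ2 ∈ A11, χ3 ∈ A21, χ3 - χ1 ∈ A11, χ3 - χ2 ∈ A10, and χ2 - χ1 ∈ A01 is χ1 = χ2 = χ3 = (0,0). -/
import Mathlib


/-- Acyclic set `A(K(1,0))` on the Beauville surface. -/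
def A10 : Set (ZMod 5 × ZMod 5) := {(0, 0), (0, 1), (0, 2), (1, 4), (2, 3), (3, 0), (4, 0)}
/-- Acyclic set `A(K(1,1))`. -/
def A11 : Set (ZMod 5 × ZMod 5) := {(0, 0), (1, 2), (2, 1), (2, 2), (3, 3), (3, 4), (4, 3)}
/-- Acyclic set `A(K(2,1))`. -/
def A21 : Set (ZMod 5 × ZMod 5) := {(0, 0), (1, 2), (2, 1), (2, 2)}
/-- Acyclic set `A(K(0,1))`. -/
def A01 : Set (ZMod 5 × ZMod 5) := {(0, 0), (3, 3), (3, 4), (4, 3)}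

set_option maxHeartbeats 10000000 in
set_option synthInstance.maxHeartbeats 2000000 in
set_option synthInstance.maxSize 2000 in
/-- The only triple `(χ1, χ2, χ3)` with `χ1 ∈ A10`, `χ2 ∈ A11`, `χ3 ∈ A21`,
`χ3 - χ1 ∈ A11`, `χ3 - χ2 ∈ A10`, `χ2 - χ1 ∈ A01` is the trivial one: the only
exceptional collection of numerical type `I₀` has trivial twists. -/
theorem stmt_13 (χ1 χ2 χ3 : ZMod 5 × ZMod 5) :
    (χ1 ∈ A10 ∧ χ2 ∈ A11 ∧ χ3 ∈ A21 ∧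
     χ3 - χ1 ∈ A11 ∧ χ3 - χ2 ∈ A10 ∧ χ2 - χ1 ∈ A01) ↔
    (χ1 = (0, 0) ∧ χ2 = (0, 0) ∧ χ3 = (0, 0)) := by
  simp only [A10, A11, A21, A01, Set.mem_insert_iff, Set.mem_singleton_iff]
  revert χ1 χ2 χ3
  decide
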